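/- Let W be a real normed vector space and Vₕ ⊆ W a linear subspace. Let A, Aₕ : W × W → ℝ be bilinear forms and let α > 0 and M, Mₕ ≥ 0 be constants such that |A(v,w)| ≤ M‖v‖‖w‖ for all v, w ∈ W, |Aₕ(v,w)| ≤ Mₕ‖v‖‖w‖ for all v, w ∈ W, and Aₕ(vₕ,vₕ) ≥ α‖vₕ‖² for all vₕ ∈ Vₕ. Let f, fₕ : W → ℝ be linear, let u ∈ W, and let uₕ ∈ Vₕ satisfy Aₕ(uₕ,wₕ) = fₕ(wₕ) for all wₕ ∈ Vₕ. Then there exists a constant C > 0, depending only on α, M and Mₕ, such that: for all vₕ ∈ Vₕ, all p ∈ W, and all E₁, E₂, E₃ ≥ 0 satisfying |fₕ(wₕ) − f(wₕ)| ≤ E₁‖wₕ‖, |A(p,wₕ) − Aₕ(p,wₕ)| ≤ E₂‖wₕ‖, and |A(u,wₕ) − f(wₕ)| ≤ E₃‖wₕ‖ for every wₕ ∈ Vₕ, one has ‖u − uₕ‖ ≤ C(‖u − vₕ‖ + ‖u − p‖ + E₁ + E₂ + E₃). -/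

import Mathlib

/-!
Put `δ = uₕ - vₕ ∈ Vₕ`. Since `Aₕ uₕ δ = fₕ δ`, the residual `Aₕ δ δ` splits as
`(fₕ - f) δ + (f - A u) δ + A (u - p) δ + (A - Aₕ) p δ + Aₕ (p - vₕ) δ`,
each term bounded by a multiple of `‖δ‖`. Coercivity turns this into a bound on `α ‖δ‖`, and the
triangle inequality `‖u - uₕ‖ ≤ ‖u - vₕ‖ + ‖δ‖` finishes the proof.
-/

lemma mul_le_of_mul_sq_le_mul {a x K : ℝ} (hx : 0 ≤ x) (hK : 0 ≤ K) (h : a * x ^ 2 ≤ K * x) :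
    a * x ≤ K := by
  rcases hx.eq_or_lt with rfl | hx
  · simpa using hK
  · exact le_of_mul_le_mul_right (by linarith [sq x]) hx

section StrangLemma

variable {W : Type*} [NormedAddCommGroup W] [NormedSpace ℝ W]
  {V : Submodule ℝ W} {A Ah : W →ₗ[ℝ] W →ₗ[ℝ] ℝ} {f fh : W →ₗ[ℝ] ℝ}

lemma mul_norm_le_of_coercive {α K : ℝ} (hcoer : ∀ v ∈ V, α * ‖v‖ ^ 2 ≤ Ah v v)
    (hK : 0 ≤ K) {v : W} (hv : v ∈ V) (hbound : Ah v v ≤ K * ‖v‖) :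
    α * ‖v‖ ≤ K :=
  mul_le_of_mul_sq_le_mul (norm_nonneg v) hK ((hcoer v hv).trans hbound)

lemma residual_eq_consistency_split {u uh vh p w : W} (hsol : Ah uh w = fh w) :
    Ah (uh - vh) w = (fh w - f w) + (f w - A u w) + A (u - p) w + (A p w - Ah p w)
      + Ah (p - vh) w := by
  simp only [map_sub, LinearMap.sub_apply]
  linear_combination hsol

lemma residual_le_consistency_errors {M Mh E₁ E₂ E₃ : ℝ} {u uh vh p w : W} (hw : w ∈ V)
    (hAcont : ∀ v w : W, |A v w| ≤ M * ‖v‖ * ‖w‖)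
    (hAhcont : ∀ v w : W, |Ah v w| ≤ Mh * ‖v‖ * ‖w‖)
    (hsol : Ah uh w = fh w)
    (h₁ : ∀ wh ∈ V, |fh wh - f wh| ≤ E₁ * ‖wh‖)
    (h₂ : ∀ wh ∈ V, |A p wh - Ah p wh| ≤ E₂ * ‖wh‖)
    (h₃ : ∀ wh ∈ V, |A u wh - f wh| ≤ E₃ * ‖wh‖) :
    Ah (uh - vh) w ≤ (E₁ + E₂ + E₃ + M * ‖u - p‖ + Mh * ‖p - vh‖) * ‖w‖ := by
  rw [residual_eq_consistency_split (f := f) (A := A) (u := u) (p := p) hsol]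
  have b₁ := (le_abs_self _).trans (h₁ w hw)
  have b₂ := (le_abs_self _).trans ((abs_sub_comm _ _).trans_le (h₃ w hw))
  have b₃ := (le_abs_self _).trans (hAcont (u - p) w)
  have b₄ := (le_abs_self _).trans (h₂ w hw)
  have b₅ := (le_abs_self _).trans (hAhcont (p - vh) w)
  linarith

end StrangLemma

/-- Abstract Strang-type a priori error bound for (conforming or nonconforming)
virtual element methods. -/
theorem statement8 (W : Type*) [NormedAddCommGroup W] [NormedSpace ℝ W]
    (Vh : Submodule ℝ W)
    (A Ah : W →ₗ[ℝ] W →ₗ[ℝ] ℝ)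
    (α M Mh : ℝ) (hα : 0 < α) (hM : 0 ≤ M) (hMh : 0 ≤ Mh)
    (hAcont : ∀ v w : W, |A v w| ≤ M * ‖v‖ * ‖w‖)
    (hAhcont : ∀ v w : W, |Ah v w| ≤ Mh * ‖v‖ * ‖w‖)
    (hcoer : ∀ vh ∈ Vh, α * ‖vh‖^2 ≤ Ah vh vh)
    (f fh : W →ₗ[ℝ] ℝ)
    (u uh : W) (huh : uh ∈ Vh)
    (hsol : ∀ wh ∈ Vh, Ah uh wh = fh wh) :
    ∃ C > 0, ∀ vh ∈ Vh, ∀ p : W, ∀ E₁ E₂ E₃ : ℝ,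
      0 ≤ E₁ → 0 ≤ E₂ → 0 ≤ E₃ →
      (∀ wh ∈ Vh, |fh wh - f wh| ≤ E₁ * ‖wh‖) →
      (∀ wh ∈ Vh, |A p wh - Ah p wh| ≤ E₂ * ‖wh‖) →
      (∀ wh ∈ Vh, |A u wh - f wh| ≤ E₃ * ‖wh‖) →
      ‖u - uh‖ ≤ C * (‖u - vh‖ + ‖u - p‖ + E₁ + E₂ + E₃) := by
  refine ⟨1 + (1 + M + Mh) / α, by positivity, ?_⟩
  intro vh hvh p E₁ E₂ E₃ hE₁ hE₂ hE₃ h₁ h₂ h₃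
  set S := ‖u - vh‖ + ‖u - p‖ + E₁ + E₂ + E₃
  have hδ : uh - vh ∈ Vh := Vh.sub_mem huh hvh
  have hpvh : ‖p - vh‖ ≤ ‖u - p‖ + ‖u - vh‖ := by
    simpa only [dist_eq_norm] using dist_triangle_left p vh u
  have hdiscrete : α * ‖uh - vh‖ ≤ E₁ + E₂ + E₃ + M * ‖u - p‖ + Mh * ‖p - vh‖ :=
    mul_norm_le_of_coercive hcoer (by positivity) hδ
      (residual_le_consistency_errors hδ hAcont hAhcont (hsol _ hδ) h₁ h₂ h₃)
  have hδS : ‖uh - vh‖ ≤ (1 + M + Mh) / α * S := by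
    rw [div_mul_eq_mul_div, le_div_iff₀ hα, mul_comm]
    have := mul_le_mul_of_nonneg_left hpvh hMh
    nlinarith [norm_nonneg (u - vh), norm_nonneg (u - p)]
  calc ‖u - uh‖ ≤ ‖u - vh‖ + ‖uh - vh‖ := by
        simpa only [dist_eq_norm] using dist_triangle_right u uh vh
    _ ≤ (1 + (1 + M + Mh) / α) * S := by
        have : ‖u - vh‖ ≤ S := by simp only [S]; linarith [norm_nonneg (u - p)]
        linarith
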